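/- Let (u_p, u_e) be a solution of the bulk system which is positive on [0, R) for some finite R and such that both u_p(r) → 0 and u_e(r) → 0 as r → R (both densities vanish at the same point). Then the solution is a special (proportional) solution: u_e is a constant positive multiple of u_p on [0, R). -/

import Mathlib

/-!
Choose `k > 0` with `(B + k E) k^{3/2} = A + k F`. Then `τ = u_e - k u_p` satisfies
`Δτ = (B + k E) (u_e^{3/2} - (k u_p)^{3/2})`, which has the sign of `τ`, and `τ` vanishes
at `R`. By the maximum principle for the radial Laplacian `Δτ = τ'' + (2/r) τ'`, both `τ`
and `-τ` are `≤ 0` on `[0, R)`. The maximum principle itself: at the last maximum point `r₀`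
of a positive `τ` the flux `r² τ'` vanishes, and it is nondecreasing as long as `τ > 0`, so
`τ` cannot drop below its maximum just after `r₀`.
-/

open Set Filter Topology

noncomputable section

/-- `(u_p, u_e)` is a solution of the bulk system on the set `s ⊆ [0,∞)` (which should
contain `0`): both functions are `C²` on `s`, satisfy the initial conditions
`u_p(0) = α`, `u_e(0) = β`, `u_p'(0) = u_e'(0) = 0`, are positive on `s`, and satisfy
`u_p'' + (2/r) u_p' = F u_p^{3/2} − E u_e^{3/2}`,
`u_e'' + (2/r) u_e' = B u_e^{3/2} − A u_p^{3/2}` at every `r ∈ s` with `r > 0`. -/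
def IsBulkSolOn (A B E F α β : ℝ) (s : Set ℝ) (up ue : ℝ → ℝ) : Prop :=
  ContDiffOn ℝ 2 up s ∧ ContDiffOn ℝ 2 ue s ∧
  up 0 = α ∧ ue 0 = β ∧
  derivWithin up s 0 = 0 ∧ derivWithin ue s 0 = 0 ∧
  (∀ r ∈ s, 0 < r →
    derivWithin (derivWithin up s) s r + 2 / r * derivWithin up s r
      = F * up r ^ ((3:ℝ)/2) - E * ue r ^ ((3:ℝ)/2) ∧
    derivWithin (derivWithin ue s) s r + 2 / r * derivWithin ue s r
      = B * ue r ^ ((3:ℝ)/2) - A * up r ^ ((3:ℝ)/2)) ∧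
  (∀ r ∈ s, 0 < up r ∧ 0 < ue r)

/-- The Laplacian of `x ↦ f ‖x‖` on `ℝ³`, with derivatives taken within `s`. -/
def radialLaplacian (s : Set ℝ) (f : ℝ → ℝ) (r : ℝ) : ℝ :=
  derivWithin (derivWithin f s) s r + 2 / r * derivWithin f s r

lemma radialLaplacian_neg (s : Set ℝ) (f : ℝ → ℝ) (r : ℝ) :
    radialLaplacian s (fun x => -f x) r = -radialLaplacian s f r := by
  have h : derivWithin (fun x => -f x) s = fun x => -derivWithin f s x :=
    funext fun _ => derivWithin.fun_neg
  rw [radialLaplacian, radialLaplacian, h, derivWithin.fun_neg]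
  ring

lemma radialLaplacian_sub_const_mul {s : Set ℝ} {f g : ℝ → ℝ} (hs : UniqueDiffOn ℝ s)
    (hf : ContDiffOn ℝ 2 f s) (hg : ContDiffOn ℝ 2 g s) (c : ℝ) {x : ℝ} (hx : x ∈ s) :
    radialLaplacian s (fun r => f r - c * g r) x
      = radialLaplacian s f x - c * radialLaplacian s g x := by
  have hf' := hf.derivWithin hs (m := 1) (by norm_num)
  have hg' := hg.derivWithin hs (m := 1) (by norm_num)
  have hderiv : ∀ {f g : ℝ → ℝ}, DifferentiableOn ℝ f s → DifferentiableOn ℝ g s →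
      EqOn (derivWithin (fun r => f r - c * g r) s)
        (fun r => derivWithin f s r - c * derivWithin g s r) s := fun hf hg y hy => by
    rw [derivWithin_fun_sub (hf y hy) ((hg y hy).const_mul c), derivWithin_const_mul c (hg y hy)]
  have h1 := hderiv (hf.differentiableOn (by norm_num)) (hg.differentiableOn (by norm_num))
  have h2 := hderiv (hf'.differentiableOn (by norm_num)) (hg'.differentiableOn (by norm_num)) hx
  rw [radialLaplacian, radialLaplacian, radialLaplacian, derivWithin_congr h1 (h1 hx), h2,
    h1 hx]
  ring

/-- The flux `r² τ'` has derivative `r² Δτ`; if it starts nonnegative it stays so, hence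
`τ' ≥ 0`. -/
lemma le_of_radial_subharmonic {τ τ' τ'' : ℝ → ℝ} {a b : ℝ} (ha : 0 ≤ a) (hab : a ≤ b)
    (hτ : ContinuousOn τ (Icc a b)) (hτ' : ContinuousOn τ' (Icc a b))
    (hd : ∀ x ∈ Ioo a b, HasDerivAt τ (τ' x) x)
    (hd' : ∀ x ∈ Ioo a b, HasDerivAt τ' (τ'' x) x)
    (hsub : ∀ x ∈ Ioo a b, 0 ≤ τ'' x + 2 / x * τ' x) (hflux : 0 ≤ a ^ 2 * τ' a) :
    τ a ≤ τ b := by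
  have hflux_mono : MonotoneOn (fun x => x ^ 2 * τ' x) (Icc a b) := by
    refine monotoneOn_of_hasDerivWithinAt_nonneg (convex_Icc a b)
      ((continuousOn_pow 2).mul hτ') (f' := fun x => 2 * x * τ' x + x ^ 2 * τ'' x) ?_ ?_
      <;> rw [interior_Icc] <;> intro x hx
    · simpa using ((hasDerivAt_pow 2 x).fun_mul (hd' x hx)).hasDerivWithinAt
    · have hx0 : 0 < x := ha.trans_lt hx.1
      calc 0 ≤ x ^ 2 * (τ'' x + 2 / x * τ' x) := mul_nonneg (sq_nonneg x) (hsub x hx)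
        _ = 2 * x * τ' x + x ^ 2 * τ'' x := by field_simp; ring
  have hτ'_nonneg : ∀ x ∈ Ioo a b, 0 ≤ τ' x := fun x hx =>
    nonneg_of_mul_nonneg_right
      (hflux.trans (hflux_mono (left_mem_Icc.2 hab) (Ioo_subset_Icc_self hx) hx.1.le))
      (pow_pos (ha.trans_lt hx.1) 2)
  have hmono : MonotoneOn τ (Icc a b) :=
    monotoneOn_of_hasDerivWithinAt_nonneg (convex_Icc a b) hτ
      (by simpa using fun x hx => (hd x hx).hasDerivWithinAt) (by simpa using hτ'_nonneg)
  exact hmono (left_mem_Icc.2 hab) (right_mem_Icc.2 hab) hab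

lemma exists_isMaxOn_Ico_lt {f : ℝ → ℝ} {a b l c : ℝ} (hf : ContinuousOn f (Ico a b))
    (hlim : Tendsto f (𝓝[<] b) (𝓝 l)) (hc : c ∈ Ico a b) (hl : l < f c) :
    ∃ r ∈ Ico a b, IsMaxOn f (Ico a b) r ∧ ∀ x ∈ Ioo r b, f x < f r := by
  obtain ⟨e, he, hlt⟩ := mem_nhdsLT_iff_exists_Ioo_subset.1 (hlim.eventually_lt_const hl)
  obtain ⟨d, hd, hdb⟩ := exists_between (max_lt he hc.2)
  have hcd : c < d := (le_max_right e c).trans_lt hd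
  have htail : ∀ x ∈ Ico a b, d < x → f x < f c := fun x hx hdx =>
    hlt ⟨(le_max_left e c).trans_lt (hd.trans hdx), hx.2⟩
  have hK : Icc a d ⊆ Ico a b := Icc_subset_Ico_right hdb
  obtain ⟨m, hm, hmax⟩ :=
    isCompact_Icc.exists_isMaxOn ⟨c, hc.1, hcd.le⟩ (hf.mono hK)
  have hZ : IsClosed (Icc a d ∩ f ⁻¹' {f m}) :=
    (hf.mono hK).preimage_isClosed_of_isClosed isClosed_Icc isClosed_singleton
  obtain ⟨r, ⟨hrK, hrm⟩, hlast⟩ :=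
    (isCompact_Icc.of_isClosed_subset hZ inter_subset_left).exists_isGreatest ⟨m, hm, rfl⟩
  have hcm : f c ≤ f m := hmax ⟨hc.1, hcd.le⟩
  simp only [mem_preimage, mem_singleton_iff] at hrm
  refine ⟨r, hK hrK, fun x hx => ?_, fun x hx => ?_⟩ <;> rw [hrm]
  · rcases le_or_gt x d with hxd | hxd
    · exact hmax ⟨hx.1, hxd⟩
    · exact (htail x hx hxd).le.trans hcm
  · rcases le_or_gt x d with hxd | hxd
    · have hxK : x ∈ Icc a d := ⟨hrK.1.trans hx.1.le, hxd⟩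
      exact (hmax hxK).lt_of_ne fun h => hx.1.not_ge (hlast ⟨hxK, h⟩)
    · exact (htail x ⟨hrK.1.trans hx.1.le, hx.2⟩ hxd).trans_le hcm

theorem nonpos_of_radialLaplacian_nonneg {τ : ℝ → ℝ} {R : ℝ}
    (hτ : ContDiffOn ℝ 2 τ (Ico 0 R))
    (hsub : ∀ x ∈ Ioo 0 R, 0 < τ x → 0 ≤ radialLaplacian (Ico 0 R) τ x)
    (hlim : Tendsto τ (𝓝[<] R) (𝓝 0)) {r : ℝ} (hr : r ∈ Ico 0 R) : τ r ≤ 0 := by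
  by_contra! hpos
  set s := Ico (0 : ℝ) R
  obtain ⟨r₀, hr₀, hmax, hlt⟩ := exists_isMaxOn_Ico_lt hτ.continuousOn hlim hr hpos
  have hτ₀ : 0 < τ r₀ := hpos.trans_le (hmax hr)
  have hτ' : ContDiffOn ℝ 1 (derivWithin τ s) s :=
    hτ.derivWithin (uniqueDiffOn_Ico 0 R) (by norm_num)
  have hflux : r₀ ^ 2 * derivWithin τ s r₀ = 0 := by
    rcases hr₀.1.eq_or_lt with h | h
    · simp [← h]
    · have hs : s ∈ 𝓝 r₀ := Ico_mem_nhds h hr₀.2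
      rw [derivWithin_of_mem_nhds hs, (hmax.isLocalMax hs).deriv_eq_zero, mul_zero]
  have hright : ∀ᶠ x in 𝓝[≥] r₀, 0 < τ x ∧ x ∈ Ico r₀ R :=
    (((hτ.continuousOn r₀ hr₀).mono_of_mem_nhdsWithin
      (mem_of_superset (Ico_mem_nhdsGE hr₀.2) (Ico_subset_Ico_left hr₀.1))).eventually_const_lt
      hτ₀).and (Ico_mem_nhdsGE hr₀.2)
  obtain ⟨b, hr₀b, hb⟩ := mem_nhdsGE_iff_exists_Icc_subset.1 hright
  have hbs : Icc r₀ b ⊆ s := fun x hx => ⟨hr₀.1.trans hx.1, (hb hx).2.2⟩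
  have hIoo : Ioo r₀ b ⊆ Ioo 0 R := fun x hx =>
    ⟨hr₀.1.trans_lt hx.1, (hb (Ioo_subset_Icc_self hx)).2.2⟩
  have hderiv : ∀ {g : ℝ → ℝ}, ContDiffOn ℝ 1 g s →
      ∀ x ∈ Ioo r₀ b, HasDerivAt g (derivWithin g s x) x := fun hg x hx =>
    (hg.differentiableOn one_ne_zero x (Ioo_subset_Ico_self (hIoo hx))).hasDerivWithinAt.hasDerivAt
      (mem_of_superset (isOpen_Ioo.mem_nhds (hIoo hx)) Ioo_subset_Ico_self)
  have hmono := le_of_radial_subharmonic hr₀.1 hr₀b.le (hτ.continuousOn.mono hbs)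
    (hτ'.continuousOn.mono hbs) (hderiv (hτ.of_le one_le_two)) (hderiv hτ')
    (fun x hx => hsub x (hIoo hx) (hb (Ioo_subset_Icc_self hx)).1) hflux.ge
  exact (hlt b ⟨hr₀b, (hb (right_mem_Icc.2 hr₀b.le)).2.2⟩).not_ge hmono

theorem eqOn_zero_of_mul_radialLaplacian_nonneg {τ : ℝ → ℝ} {R : ℝ}
    (hτ : ContDiffOn ℝ 2 τ (Ico 0 R))
    (hsign : ∀ x ∈ Ioo 0 R, 0 ≤ τ x * radialLaplacian (Ico 0 R) τ x)
    (hlim : Tendsto τ (𝓝[<] R) (𝓝 0)) : EqOn τ 0 (Ico 0 R) := by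
  intro r hr
  have hneg : -τ r ≤ 0 := by
    refine nonpos_of_radialLaplacian_nonneg (τ := fun x => -τ x) hτ.neg (fun x hx hx' => ?_)
      (by simpa using hlim.neg) hr
    rw [radialLaplacian_neg]
    nlinarith [hsign x hx, show τ x < 0 from neg_pos.1 hx']
  exact le_antisymm (nonpos_of_radialLaplacian_nonneg hτ
    (fun x hx hx' => nonneg_of_mul_nonneg_right (hsign x hx) hx') hlim hr) (neg_nonpos.1 hneg)

lemma exists_pos_add_mul_mul_rpow_eq {A B E F p : ℝ} (hA : 0 < A) (hB : 0 ≤ B) (hE : 0 < E)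
    (hp : 1 ≤ p) : ∃ k, 0 < k ∧ (B + k * E) * k ^ p = A + k * F := by
  set f : ℝ → ℝ := fun k => (B + k * E) * k ^ p - k * F
  have hf : Continuous f :=
    ((continuous_const.add (continuous_id.mul continuous_const)).mul
      (Real.continuous_rpow_const (by linarith))).sub (continuous_id.mul continuous_const)
  set K := 1 + (A + |F|) / E
  have hK : 1 ≤ K := le_add_of_nonneg_right (by positivity)
  have hEK : A + |F| ≤ E * K := by
    have : E * K = E + (A + |F|) := by simp only [K]; field_simp
    linarith
  have hfK : A ≤ f K := by
    have hKp : K ≤ K ^ p := by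
      simpa using Real.rpow_le_rpow_of_exponent_le hK hp
    calc A ≤ K * A := le_mul_of_one_le_left hA.le hK
      _ = K * (A + |F|) - K * |F| := by ring
      _ ≤ K * (E * K) - K * F := by gcongr; exact le_abs_self F
      _ = K * E * K - K * F := by ring
      _ ≤ (B + K * E) * K ^ p - K * F := by
        gcongr
        linarith
  have hf0 : f 0 = 0 := by simp [f, Real.zero_rpow (by linarith : p ≠ 0)]
  obtain ⟨k, hk, hfk⟩ := intermediate_value_Icc (by linarith) hf.continuousOn
    (show A ∈ Icc (f 0) (f K) from ⟨hf0.symm ▸ hA.le, hfK⟩)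
  refine ⟨k, hk.1.lt_of_ne ?_, by simp only [f] at hfk; linarith⟩
  rintro rfl
  exact hA.ne' (hfk ▸ hf0)

lemma sub_mul_rpow_sub_nonneg {a b p : ℝ} (ha : 0 ≤ a) (hb : 0 ≤ b) (hp : 0 ≤ p) :
    0 ≤ (a - b) * (a ^ p - b ^ p) := by
  rcases le_total a b with h | h
  · exact mul_nonneg_of_nonpos_of_nonpos (sub_nonpos.2 h)
      (sub_nonpos.2 (Real.rpow_le_rpow ha h hp))
  · exact mul_nonneg (sub_nonneg.2 h) (sub_nonneg.2 (Real.rpow_le_rpow hb h hp))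

lemma IsBulkSolOn.radialLaplacian_sub_const_mul {A B E F α β R k : ℝ} {up ue : ℝ → ℝ}
    (hsol : IsBulkSolOn A B E F α β (Ico 0 R) up ue) (hk : 0 ≤ k)
    (hkeq : (B + k * E) * k ^ ((3:ℝ)/2) = A + k * F) {x : ℝ} (hx : x ∈ Ioo 0 R) :
    radialLaplacian (Ico 0 R) (fun r => ue r - k * up r) x
      = (B + k * E) * (ue x ^ ((3:ℝ)/2) - (k * up x) ^ ((3:ℝ)/2)) := by
  obtain ⟨hup, hue, -, -, -, -, hode, hpos⟩ := hsol
  have hxs : x ∈ Ico 0 R := Ioo_subset_Ico_self hx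
  obtain ⟨hode_p, hode_e⟩ := hode x hxs hx.1
  rw [_root_.radialLaplacian_sub_const_mul (uniqueDiffOn_Ico 0 R) hue hup k hxs,
    radialLaplacian, radialLaplacian, hode_p, hode_e, Real.mul_rpow hk (hpos x hxs).1.le]
  linear_combination up x ^ ((3:ℝ)/2) * hkeq

theorem stmt15_general (A B E F : ℝ) (hA : 0 < A) (hB : 0 < B) (hE : 0 < E)
    (α β R : ℝ)
    (up ue : ℝ → ℝ) (hsol : IsBulkSolOn A B E F α β (Ico 0 R) up ue)
    (hvp : Tendsto up (nhdsWithin R (Iio R)) (nhds 0))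
    (hve : Tendsto ue (nhdsWithin R (Iio R)) (nhds 0)) :
    ∃ k : ℝ, 0 < k ∧ ∀ r ∈ Ico 0 R, ue r = k * up r := by
  have ⟨hup, hue, _, _, _, _, _, hpos⟩ := hsol
  obtain ⟨k, hk, hkeq⟩ := exists_pos_add_mul_mul_rpow_eq (F := F) hA hB.le hE
    (by norm_num : (1:ℝ) ≤ 3 / 2)
  have hτ : ContDiffOn ℝ 2 (fun r => ue r - k * up r) (Ico 0 R) :=
    hue.sub (contDiffOn_const.mul hup)
  have hsign : ∀ x ∈ Ioo 0 R,
      0 ≤ (ue x - k * up x) * radialLaplacian (Ico 0 R) (fun r => ue r - k * up r) x := by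
    intro x hx
    obtain ⟨hupx, huex⟩ := hpos x (Ioo_subset_Ico_self hx)
    rw [hsol.radialLaplacian_sub_const_mul hk.le hkeq hx, mul_left_comm]
    exact mul_nonneg (by positivity)
      (sub_mul_rpow_sub_nonneg huex.le (by positivity) (by norm_num))
  have hlim : Tendsto (fun r => ue r - k * up r) (𝓝[<] R) (𝓝 0) := by
    simpa using hve.sub (hvp.const_mul k)
  exact ⟨k, hk, fun r hr =>
    sub_eq_zero.1 (eqOn_zero_of_mul_radialLaplacian_nonneg hτ hsign hlim hr)⟩

/-- Lemma 5.6: if both densities vanish at the same finite radius, then the solution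
is a special (proportional) solution. -/
theorem stmt15 (A B E F : ℝ) (hA : 0 < A) (hB : 0 < B) (hE : 0 < E) (hF : 0 < F)
    (hEF : F < E) (hAB : B < A) (hBFEA : B * F < E * A)
    (α β R : ℝ) (hα : 0 < α) (hβ : 0 < β) (hR : 0 < R)
    (up ue : ℝ → ℝ) (hsol : IsBulkSolOn A B E F α β (Ico 0 R) up ue)
    (hvp : Tendsto up (nhdsWithin R (Iio R)) (nhds 0))
    (hve : Tendsto ue (nhdsWithin R (Iio R)) (nhds 0)) :
    ∃ k : ℝ, 0 < k ∧ ∀ r ∈ Ico 0 R, ue r = k * up r :=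
  stmt15_general A B E F hA hB hE α β R up ue hsol hvp hve
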